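/- arXiv:2502.13588 — 3 statements merged into one kernel-verified Lean document; each statement's English description precedes it below -/
import Mathlib

section
/- Let ω ∈ ℝ with ω ≠ 0. Let κ, ν : ℝ³ → ℂ be smooth scalar fields, let φ, ρ : ℝ³ → ℂ be smooth scalar fields, and let A, J₀, Dₑ : ℝ³ → ℂ³ be smooth vector fields. Assume that pointwise on ℝ³: (i) −div(κ · grad φ) = i ω ρ; (ii) curl(ν · curl A) + i ω κ · A = J₀ + i ω Dₑ − κ · grad φ; (iii) div J₀ = 0; (iv) div Dₑ = −ρ. Then the generalized Coulomb gauge div(κ · A) = 0 holds everywhere on ℝ³. -/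
open scoped BigOperators

/-- Partial derivative in the `j`-th coordinate direction of a scalar field on `ℝ³`. -/
noncomputable def pderiv3 (j : Fin 3) (f : (Fin 3 → ℝ) → ℂ) (x : Fin 3 → ℝ) : ℂ :=
  fderiv ℝ f x (Pi.single j 1)

/-- Gradient of a scalar field on `ℝ³`. -/
noncomputable def grad3 (f : (Fin 3 → ℝ) → ℂ) (x : Fin 3 → ℝ) : Fin 3 → ℂ :=
  fun j => pderiv3 j f x

/-- Divergence of a vector field on `ℝ³`. -/
noncomputable def div3 (F : (Fin 3 → ℝ) → Fin 3 → ℂ) (x : Fin 3 → ℝ) : ℂ :=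
  ∑ j : Fin 3, pderiv3 j (fun y => F y j) x

/-- Curl of a vector field on `ℝ³`. -/
noncomputable def curl3 (F : (Fin 3 → ℝ) → Fin 3 → ℂ) (x : Fin 3 → ℝ) : Fin 3 → ℂ :=
  ![pderiv3 1 (fun y => F y 2) x - pderiv3 2 (fun y => F y 1) x,
    pderiv3 2 (fun y => F y 0) x - pderiv3 0 (fun y => F y 2) x,
    pderiv3 0 (fun y => F y 1) x - pderiv3 1 (fun y => F y 0) x]

/-! ### Auxiliary lemmas -/

lemma ContDiff.pderiv3' {f : (Fin 3 → ℝ) → ℂ} (hf : ContDiff ℝ (⊤ : ℕ∞) f) (j : Fin 3) :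
    ContDiff ℝ (⊤ : ℕ∞) (pderiv3 j f) :=
  (hf.fderiv_right (by simp)).clm_apply contDiff_const

lemma pderiv3_comm {f : (Fin 3 → ℝ) → ℂ} (hf : ContDiff ℝ (⊤ : ℕ∞) f) (j k : Fin 3)
    (x : Fin 3 → ℝ) :
    pderiv3 j (fun y => pderiv3 k f y) x = pderiv3 k (fun y => pderiv3 j f y) x := by
  set f' := fderiv ℝ f with hf'
  have hd : ∀ y, HasFDerivAt f (f' y) y := fun y =>
    (hf.differentiable (by simp) y).hasFDerivAt
  have hd2 : DifferentiableAt ℝ f' x :=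
    (hf.fderiv_right (m := 1) (WithTop.coe_le_coe.mpr le_top)).differentiable one_ne_zero x
  have hsymm := second_derivative_symmetric hd hd2.hasFDerivAt
  have key : ∀ v w : Fin 3 → ℝ,
      fderiv ℝ (fun y => f' y v) x w = fderiv ℝ f' x w v := by
    intro v w
    have := fderiv_clm_apply (𝕜 := ℝ) (c := f') (u := fun _ => v) hd2
      (differentiableAt_const v)
    rw [show (fun y => f' y v) = fun y => f' y ((fun _ => v) y) from rfl, this]
    simp
  show fderiv ℝ (fun y => f' y (Pi.single k 1)) x (Pi.single j 1)
      = fderiv ℝ (fun y => f' y (Pi.single j 1)) x (Pi.single k 1)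
  rw [key, key, hsymm]

lemma pderiv3_sub {f g : (Fin 3 → ℝ) → ℂ} {x} (hf : DifferentiableAt ℝ f x)
    (hg : DifferentiableAt ℝ g x) (j : Fin 3) :
    pderiv3 j (fun y => f y - g y) x = pderiv3 j f x - pderiv3 j g x := by
  unfold pderiv3
  rw [fderiv_fun_sub hf hg]; rfl

lemma pderiv3_add {f g : (Fin 3 → ℝ) → ℂ} {x} (hf : DifferentiableAt ℝ f x)
    (hg : DifferentiableAt ℝ g x) (j : Fin 3) :
    pderiv3 j (fun y => f y + g y) x = pderiv3 j f x + pderiv3 j g x := by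
  unfold pderiv3
  rw [fderiv_fun_add hf hg]; rfl

lemma pderiv3_const_mul {f : (Fin 3 → ℝ) → ℂ} {x} (hf : DifferentiableAt ℝ f x)
    (c : ℂ) (j : Fin 3) :
    pderiv3 j (fun y => c * f y) x = c * pderiv3 j f x := by
  unfold pderiv3
  rw [fderiv_const_mul hf]; rfl

lemma contDiff_curl3 {F : (Fin 3 → ℝ) → Fin 3 → ℂ} (hF : ContDiff ℝ (⊤ : ℕ∞) F) :
    ContDiff ℝ (⊤ : ℕ∞) (curl3 F) := by
  have hc : ∀ j : Fin 3, ContDiff ℝ (⊤ : ℕ∞) (fun y => F y j) := fun j => (contDiff_pi.mp hF) j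
  rw [contDiff_pi]
  intro i
  fin_cases i <;> simp only [curl3, Matrix.cons_val_zero, Matrix.cons_val_one,
    Matrix.head_cons, Matrix.cons_val_two, Matrix.tail_cons]
  · exact ((hc 2).pderiv3' 1).sub ((hc 1).pderiv3' 2)
  · exact ((hc 0).pderiv3' 2).sub ((hc 2).pderiv3' 0)
  · exact ((hc 1).pderiv3' 0).sub ((hc 0).pderiv3' 1)

lemma div3_curl3 {F : (Fin 3 → ℝ) → Fin 3 → ℂ} (hF : ContDiff ℝ (⊤ : ℕ∞) F)
    (x : Fin 3 → ℝ) : div3 (curl3 F) x = 0 := by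
  have hc : ∀ j : Fin 3, ContDiff ℝ (⊤ : ℕ∞) (fun y => F y j) := fun j => (contDiff_pi.mp hF) j
  have hd : ∀ j k : Fin 3, DifferentiableAt ℝ (fun y => pderiv3 j (fun z => F z k) y) x :=
    fun j k => (((hc k).pderiv3' j).differentiable (by simp) x)
  unfold div3
  rw [Fin.sum_univ_three]
  simp only [curl3, Matrix.cons_val_zero, Matrix.cons_val_one, Matrix.head_cons,
    Matrix.cons_val_two, Matrix.tail_cons]
  rw [pderiv3_sub (hd 1 2) (hd 2 1), pderiv3_sub (hd 2 0) (hd 0 2),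
    pderiv3_sub (hd 0 1) (hd 1 0),
    pderiv3_comm (hc 2) 0 1, pderiv3_comm (hc 1) 0 2, pderiv3_comm (hc 0) 1 2]
  ring

/-- The implicit generalized Coulomb gauge `div (κ • A) = 0` of the two-step
formulation of Maxwell's equations. -/
theorem generalized_coulomb_gauge (ω : ℝ) (hω : ω ≠ 0)
    (κ ν φ ρ : (Fin 3 → ℝ) → ℂ)
    (A J₀ De : (Fin 3 → ℝ) → Fin 3 → ℂ)
    (hκ : ContDiff ℝ (⊤ : ℕ∞) κ) (hν : ContDiff ℝ (⊤ : ℕ∞) ν)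
    (hφ : ContDiff ℝ (⊤ : ℕ∞) φ) (hρ : ContDiff ℝ (⊤ : ℕ∞) ρ)
    (hA : ContDiff ℝ (⊤ : ℕ∞) A) (hJ : ContDiff ℝ (⊤ : ℕ∞) J₀) (hD : ContDiff ℝ (⊤ : ℕ∞) De)
    (h1 : ∀ x, -div3 (fun y => κ y • grad3 φ y) x = Complex.I * ω * ρ x)
    (h2 : ∀ x, curl3 (fun y => ν y • curl3 A y) x + (Complex.I * ω * κ x) • A x
        = J₀ x + (Complex.I * ω) • De x - κ x • grad3 φ x)
    (h3 : ∀ x, div3 J₀ x = 0)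
    (h4 : ∀ x, div3 De x = -ρ x) :
    ∀ x, div3 (fun y => κ y • A y) x = 0 := by
  intro x
  set c : ℂ := Complex.I * ω with hc
  have hcne : c ≠ 0 := by
    simp [hc, Complex.I_ne_zero, Complex.ofReal_ne_zero, hω]
  -- the smooth vector field G = ν • curl A
  set G : (Fin 3 → ℝ) → Fin 3 → ℂ := fun y => ν y • curl3 A y with hGdef
  have hG : ContDiff ℝ (⊤ : ℕ∞) G := by
    rw [contDiff_pi]
    intro i
    exact hν.mul ((contDiff_pi.mp (contDiff_curl3 hA)) i)
  have hGc : ∀ j : Fin 3, ContDiff ℝ (⊤ : ℕ∞) (fun y => curl3 G y j) :=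
    fun j => (contDiff_pi.mp (contDiff_curl3 hG)) j
  have hAj : ∀ j : Fin 3, ContDiff ℝ (⊤ : ℕ∞) (fun y => A y j) := contDiff_pi.mp hA
  have hJj : ∀ j : Fin 3, ContDiff ℝ (⊤ : ℕ∞) (fun y => J₀ y j) := contDiff_pi.mp hJ
  have hDj : ∀ j : Fin 3, ContDiff ℝ (⊤ : ℕ∞) (fun y => De y j) := contDiff_pi.mp hD
  have hκφ : ∀ j : Fin 3, ContDiff ℝ (⊤ : ℕ∞) (fun y => κ y * grad3 φ y j) :=
    fun j => hκ.mul (hφ.pderiv3' j)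
  have hκA : ∀ j : Fin 3, ContDiff ℝ (⊤ : ℕ∞) (fun y => κ y * A y j) :=
    fun j => hκ.mul (hAj j)
  -- componentwise consequence of equation (ii)
  have key : ∀ (j : Fin 3) (y : Fin 3 → ℝ),
      c * (κ y * A y j)
        = (J₀ y j + c * De y j - κ y * grad3 φ y j) - curl3 G y j := by
    intro j y
    have h := congrFun (h2 y) j
    simp only [Pi.add_apply, Pi.sub_apply, Pi.smul_apply, smul_eq_mul] at h
    linear_combination h
  -- componentwise derivative identity
  have step : ∀ j : Fin 3,
      c * pderiv3 j (fun y => κ y * A y j) x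
        = pderiv3 j (fun y => J₀ y j) x + c * pderiv3 j (fun y => De y j) x
          - pderiv3 j (fun y => κ y * grad3 φ y j) x
          - pderiv3 j (fun y => curl3 G y j) x := by
    intro j
    have d1 : DifferentiableAt ℝ (fun y => J₀ y j) x := (hJj j).differentiable (by simp) x
    have d2 : DifferentiableAt ℝ (fun y => c * De y j) x :=
      (differentiableAt_const c).mul ((hDj j).differentiable (by simp) x)
    have d3 : DifferentiableAt ℝ (fun y => κ y * grad3 φ y j) x :=
      (hκφ j).differentiable (by simp) x
    have d4 : DifferentiableAt ℝ (fun y => curl3 G y j) x :=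
      (hGc j).differentiable (by simp) x
    rw [← pderiv3_const_mul ((hκA j).differentiable (by simp) x) c j]
    rw [show (fun y => c * (κ y * A y j))
        = fun y => (J₀ y j + c * De y j - κ y * grad3 φ y j) - curl3 G y j
      from funext fun y => key j y]
    rw [pderiv3_sub (f := fun y => J₀ y j + c * De y j - κ y * grad3 φ y j) ((d1.add d2).sub d3) d4,
      pderiv3_sub (f := fun y => J₀ y j + c * De y j) (d1.add d2) d3,
      pderiv3_add d1 d2,
      pderiv3_const_mul ((hDj j).differentiable (by simp) x) c j]
  -- sum up
  have hsum : c * div3 (fun y => κ y • A y) x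
      = div3 J₀ x + c * div3 De x - div3 (fun y => κ y • grad3 φ y) x
        - div3 (curl3 G) x := by
    simp only [div3, Pi.smul_apply, smul_eq_mul, Finset.mul_sum]
    rw [← Finset.sum_add_distrib, ← Finset.sum_sub_distrib, ← Finset.sum_sub_distrib]
    exact Finset.sum_congr rfl fun j _ => step j
  have hκφdiv : div3 (fun y => κ y • grad3 φ y) x = -(c * ρ x) := by
    have h := h1 x
    linear_combination -h
  have hfinal : c * div3 (fun y => κ y • A y) x = 0 := by
    rw [hsum, h3 x, h4 x, hκφdiv, div3_curl3 hG x]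
    ring
  exact (mul_eq_zero.mp hfinal).resolve_left hcne
end

section
/- Let R and T be finite index types, let A be an R×R complex matrix, B an R×T complex matrix, and C a T×T complex matrix, and suppose that the block matrix K = [[A, B],[Bᴴ, C]] (with Bᴴ the conjugate transpose of B) is positive semidefinite and that A is invertible. If the rank of K equals the cardinality of R, then the Schur complement vanishes: C = Bᴴ · A⁻¹ · B. -/
open Matrix
open scoped ComplexOrder

/-- If a positive semidefinite block matrix `[[A, B], [Bᴴ, C]]` with invertible
`A` has rank equal to the size of `A`, then the Schur complement vanishes:
`C = Bᴴ * A⁻¹ * B`. -/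
theorem schur_complement_eq_zero_of_rank_eq
    {R T : Type*} [Fintype R] [Fintype T] [DecidableEq R] [DecidableEq T]
    (A : Matrix R R ℂ) (B : Matrix R T ℂ) (C : Matrix T T ℂ)
    (hK : (Matrix.fromBlocks A B Bᴴ C).PosSemidef)
    (hA : IsUnit A)
    (hrank : (Matrix.fromBlocks A B Bᴴ C).rank = Fintype.card R) :
    C = Bᴴ * A⁻¹ * B := by
  set K := Matrix.fromBlocks A B Bᴴ C with hKdef
  -- the linear map y ↦ (-(A⁻¹ * B) *ᵥ y, y)
  let f : (T → ℂ) →ₗ[ℂ] (R ⊕ T → ℂ) :=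
    { toFun := fun y => Sum.elim (-((A⁻¹ * B) *ᵥ y)) y
      map_add' := by
        intro y z
        funext i
        cases i <;> simp [Matrix.mulVec_add] <;> ring
      map_smul' := by
        intro c y
        funext i
        cases i <;> simp [Matrix.mulVec_smul] <;> ring }
  have hf_inj : Function.Injective f := by
    intro y z h
    funext j
    have := congrFun h (Sum.inr j)
    simpa [f] using this
  -- kernel of K.mulVecLin is contained in range of f
  have hker_le : LinearMap.ker K.mulVecLin ≤ LinearMap.range f := by
    intro v hv
    have hv0 : K *ᵥ v = 0 := hv
    refine ⟨v ∘ Sum.inr, ?_⟩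
    have h1 : A *ᵥ (v ∘ Sum.inl) + B *ᵥ (v ∘ Sum.inr) = 0 := by
      funext i
      have := congrFun hv0 (Sum.inl i)
      simpa [hKdef, Matrix.fromBlocks_mulVec] using this
    have h2 : v ∘ Sum.inl = -((A⁻¹ * B) *ᵥ (v ∘ Sum.inr)) := by
      have := congrArg (fun w => A⁻¹ *ᵥ w) h1
      simp only [Matrix.mulVec_add, Matrix.mulVec_mulVec,
        Matrix.nonsing_inv_mul A ((Matrix.isUnit_iff_isUnit_det A).mp hA),
        Matrix.one_mulVec, Matrix.mulVec_zero] at this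
      have := eq_neg_of_add_eq_zero_left this
      rw [this]
    funext i
    cases i with
    | inl i => exact (congrFun h2 i).symm
    | inr j => simp [f]
  -- dimension count: ker has dimension card T
  have hdim : Module.finrank ℂ (LinearMap.ker K.mulVecLin) = Fintype.card T := by
    have := LinearMap.finrank_range_add_finrank_ker K.mulVecLin
    rw [show Module.finrank ℂ (LinearMap.range K.mulVecLin) = K.rank from rfl] at this
    rw [hrank] at this
    have hdom : Module.finrank ℂ (R ⊕ T → ℂ) = Fintype.card R + Fintype.card T := by
      simp [Module.finrank_pi, Fintype.card_sum]
    omega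
  have hrange_dim : Module.finrank ℂ (LinearMap.range f) = Fintype.card T := by
    rw [LinearMap.finrank_range_of_inj hf_inj]
    simp [Module.finrank_pi]
  have hker_eq : LinearMap.ker K.mulVecLin = LinearMap.range f := by
    apply Submodule.eq_of_le_of_finrank_le hker_le
    rw [hdim, hrange_dim]
  -- hence K *ᵥ f y = 0 for all y
  have hKf : ∀ y : T → ℂ, K *ᵥ (f y) = 0 := by
    intro y
    have : f y ∈ LinearMap.ker K.mulVecLin := by
      rw [hker_eq]; exact ⟨y, rfl⟩
    exact this
  -- second block row gives the result
  have key : ∀ y : T → ℂ, C *ᵥ y = (Bᴴ * A⁻¹ * B) *ᵥ y := by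
    intro y
    have := hKf y
    have h2 : Bᴴ *ᵥ (-((A⁻¹ * B) *ᵥ y)) + C *ᵥ y = 0 := by
      funext j
      have := congrFun this (Sum.inr j)
      simpa [hKdef, Matrix.fromBlocks_mulVec, f] using this
    rw [Matrix.mulVec_neg, neg_add_eq_zero] at h2
    rw [← h2, Matrix.mulVec_mulVec, Matrix.mul_assoc]
  ext i j
  have := congrFun (key (Pi.single j 1)) i
  simpa [Matrix.mulVec_single] using this
end

section
/- Let n be a natural number and let K₀ and K₁ be real symmetric positive semidefinite n×n matrices. Let ω ∈ ℝ with ω ≠ 0, and consider the complex n×n matrix K(ω) = K₀ + i ω K₁ (entrywise, viewing the real matrices as complex matrices). Then K(ω) is invertible if and only if the kernels of K₀ and K₁ (as linear maps on ℝⁿ) intersect trivially, i.e., ker K₀ ∩ ker K₁ = {0}. -/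
open Matrix
open scoped ComplexOrder

private lemma psd_map_ofReal {n : ℕ} {K : Matrix (Fin n) (Fin n) ℝ} (h : K.PosSemidef) :
    (K.map (Complex.ofReal)).PosSemidef := by
  obtain ⟨B, rfl⟩ : ∃ B : Matrix (Fin n) (Fin n) ℝ, K = Bᴴ * B := by
    classical
    open MatrixOrder in
    obtain ⟨X, hX, -, hK⟩ := CFC.exists_sqrt_of_isSelfAdjoint_of_quasispectrumRestricts h.isHermitian
      (QuasispectrumRestricts.nnreal_of_nonneg h.nonneg)
    exact ⟨X, by rw [← hK, ← star_eq_conjTranspose, hX.star_eq]⟩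
  have : (Bᴴ * B).map (Complex.ofReal) = (B.map Complex.ofReal)ᴴ * (B.map Complex.ofReal) := by
    ext i j
    simp [Matrix.mul_apply, Matrix.conjTranspose_apply, Matrix.map_apply]
  rw [this]
  exact Matrix.posSemidef_conjTranspose_mul_self _

private lemma map_mulVec_zero_iff {n : ℕ} (K : Matrix (Fin n) (Fin n) ℝ) (z : Fin n → ℂ) :
    (K.map Complex.ofReal) *ᵥ z = 0 ↔
      K *ᵥ (fun j => (z j).re) = 0 ∧ K *ᵥ (fun j => (z j).im) = 0 := by
  simp only [funext_iff, ← forall_and]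
  refine forall_congr' fun i => ?_
  simp [Complex.ext_iff, Matrix.mulVec, dotProduct, Complex.re_sum, Complex.im_sum]

/-- For real symmetric positive semidefinite matrices `K₀, K₁` and `ω ≠ 0`, the
complex matrix `K₀ + i ω K₁` is invertible iff `ker K₀ ∩ ker K₁ = {0}`. -/
theorem isUnit_add_smul_I_iff_ker_inf_eq_bot
    (n : ℕ) (K₀ K₁ : Matrix (Fin n) (Fin n) ℝ)
    (h0 : K₀.PosSemidef) (h1 : K₁.PosSemidef)
    (ω : ℝ) (hω : ω ≠ 0) :
    IsUnit (K₀.map (Complex.ofReal) + (Complex.I * ω) • K₁.map (Complex.ofReal)) ↔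
      LinearMap.ker K₀.mulVecLin ⊓ LinearMap.ker K₁.mulVecLin = ⊥ := by
  have h0' := psd_map_ofReal h0
  have h1' := psd_map_ofReal h1
  set M := K₀.map Complex.ofReal + (Complex.I * ↑ω) • K₁.map Complex.ofReal with hM
  -- key kernel characterization over ℂ
  have key : ∀ z : Fin n → ℂ, M *ᵥ z = 0 ↔
      (K₀.map Complex.ofReal) *ᵥ z = 0 ∧ (K₁.map Complex.ofReal) *ᵥ z = 0 := by
    intro z
    constructor
    · intro hz
      set a := star z ⬝ᵥ (K₀.map Complex.ofReal) *ᵥ z with ha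
      set b := star z ⬝ᵥ (K₁.map Complex.ofReal) *ᵥ z with hb
      have hsum : a + (Complex.I * ω) * b = 0 := by
        have hdot : star z ⬝ᵥ M *ᵥ z = 0 := by rw [hz, dotProduct_zero]
        rw [← hdot, hM, add_mulVec, dotProduct_add, smul_mulVec, dotProduct_smul,
          smul_eq_mul]
      have ha0 := h0'.dotProduct_mulVec_nonneg z
      have hb0 := h1'.dotProduct_mulVec_nonneg z
      rw [Complex.le_def] at ha0 hb0
      simp only [Complex.zero_re, Complex.zero_im] at ha0 hb0
      have haim : a.im = 0 := ha0.2.symm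
      have hbim : b.im = 0 := hb0.2.symm
      have hre : a.re = 0 := by
        have := congrArg Complex.re hsum
        simpa [Complex.add_re, Complex.mul_re, Complex.mul_im, haim, hbim] using this
      have hbre : b.re = 0 := by
        have := congrArg Complex.im hsum
        have h' : ω * b.re = 0 := by
          simpa [Complex.add_im, Complex.mul_re, Complex.mul_im, haim, hbim] using this
        exact (mul_eq_zero.mp h').resolve_left hω
      have haz : a = 0 := Complex.ext hre haim
      have hbz : b = 0 := Complex.ext hbre hbim
      exact ⟨(h0'.dotProduct_mulVec_zero_iff z).mp haz,
        (h1'.dotProduct_mulVec_zero_iff z).mp hbz⟩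
    · rintro ⟨hz0, hz1⟩
      rw [hM, add_mulVec, smul_mulVec, hz0, hz1, smul_zero, add_zero]
  rw [← Matrix.mulVec_injective_iff_isUnit]
  have hinj_iff : Function.Injective M.mulVec ↔ ∀ z : Fin n → ℂ, M *ᵥ z = 0 → z = 0 := by
    have : M.mulVec = ⇑M.mulVecLin := by funext z; simp [Matrix.mulVecLin_apply]
    rw [this, ← LinearMap.ker_eq_bot, Submodule.eq_bot_iff]
    simp [LinearMap.mem_ker]
  rw [hinj_iff]
  constructor
  · intro hinj
    rw [Submodule.eq_bot_iff]
    rintro x hx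
    rw [Submodule.mem_inf, LinearMap.mem_ker, LinearMap.mem_ker,
      Matrix.mulVecLin_apply, Matrix.mulVecLin_apply] at hx
    have hz : M *ᵥ (fun j => (x j : ℂ)) = 0 := by
      rw [key]
      constructor <;> rw [map_mulVec_zero_iff] <;>
        simp only [Complex.ofReal_re, Complex.ofReal_im] <;>
        exact ⟨by first | simpa using hx.1 | simpa using hx.2, Matrix.mulVec_zero _⟩
    have := hinj _ hz
    funext j
    simpa using congrFun this j
  · intro hker z hz
    rw [key, map_mulVec_zero_iff, map_mulVec_zero_iff] at hz
    rw [Submodule.eq_bot_iff] at hker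
    have hre : (fun j => (z j).re) = 0 := by
      refine hker _ ?_
      rw [Submodule.mem_inf, LinearMap.mem_ker, LinearMap.mem_ker,
        Matrix.mulVecLin_apply, Matrix.mulVecLin_apply]
      exact ⟨hz.1.1, hz.2.1⟩
    have him : (fun j => (z j).im) = 0 := by
      refine hker _ ?_
      rw [Submodule.mem_inf, LinearMap.mem_ker, LinearMap.mem_ker,
        Matrix.mulVecLin_apply, Matrix.mulVecLin_apply]
      exact ⟨hz.1.2, hz.2.2⟩
    funext j
    exact Complex.ext (congrFun hre j) (congrFun him j)
end
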